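/- Let z₁, z₂ be standard Gaussians with correlation ρ ∈ (−1,1), and let a, b ∈ ℝ. With T₁ = exp(−a²/2)·Φ((ρa−b)/√(1−ρ²)) and T₂ = exp(−b²/2)·Φ((ρb−a)/√(1−ρ²)), one has E[z₁z₂ · 1{z₁ ≥ a, z₂ ≥ b}] = (√(1−ρ²)/(2π))·exp(−(a² − 2ρab + b²)/(2(1−ρ²))) + ρ·Φ₂(−a, −b, ρ) + (ρ/√(2π))·(a T₁ + b T₂). -/

import Mathlib

/-!
Conditionally on `z₁ = x`, `z₂` is `N(ρx, s²)` with `s = √(1 - ρ²)`, so integrating in `z₂` first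
leaves `∫_{x > a} x φ(x) g(x) dx` with `g(x) = ρxΦ((ρx - b)/s) + sφ((ρx - b)/s)`, the partial mean
of that conditional law. Stein's identity on a half-line,
`∫_{x > a} x φ g = φ(a) g(a) + ∫_{x > a} φ g'`, removes the factor `x`, and
`g'(x) = ρΦ((ρx - b)/s) + ρb s⁻¹φ((b - ρx)/s)`: against `φ(x)` its first term integrates to
`ρ Φ₂(-a, -b, ρ)` and its second, which is `ρb` times the joint density at `(x, b)`, to
`ρb φ(b) Φ((ρb - a)/s)`.
-/

open MeasureTheory Real

/-- The standard normal probability density function. -/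
noncomputable def stdGaussianPDF (t : ℝ) : ℝ :=
  (Real.sqrt (2 * Real.pi))⁻¹ * Real.exp (-t ^ 2 / 2)

/-- The standard normal cumulative distribution function. -/
noncomputable def stdNormalCDF (x : ℝ) : ℝ :=
  ∫ t in Set.Iic x, stdGaussianPDF t

/-- Density of the bivariate standard Gaussian with correlation `ρ`. -/
noncomputable def bivStdGaussianPDF (ρ x y : ℝ) : ℝ :=
  (2 * Real.pi * Real.sqrt (1 - ρ ^ 2))⁻¹ *
    Real.exp (-(x ^ 2 - 2 * ρ * x * y + y ^ 2) / (2 * (1 - ρ ^ 2)))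

/-- Joint CDF of the bivariate standard Gaussian with correlation `ρ`. -/
noncomputable def bivStdNormalCDF (a b ρ : ℝ) : ℝ :=
  ∫ p in Set.Iic a ×ˢ Set.Iic b, bivStdGaussianPDF ρ p.1 p.2

open Set ProbabilityTheory

local notation "φ" => stdGaussianPDF
local notation "Φ" => stdNormalCDF

lemma integrable_pow_mul_exp_neg_mul_sq {k : ℝ} (hk : 0 < k) (n : ℕ) :
    Integrable fun x : ℝ => x ^ n * exp (-k * x ^ 2) := by
  simpa only [rpow_natCast] using
    integrable_rpow_mul_exp_neg_mul_sq hk (s := n) (by linarith [n.cast_nonneg (α := ℝ)])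

lemma stdGaussianPDF_eq_gaussianPDFReal : φ = gaussianPDFReal 0 1 := by
  ext t
  simp [stdGaussianPDF, gaussianPDFReal]

lemma stdGaussianPDF_nonneg (t : ℝ) : 0 ≤ φ t := by
  rw [stdGaussianPDF_eq_gaussianPDFReal]
  exact gaussianPDFReal_nonneg _ _ _

lemma stdGaussianPDF_neg (t : ℝ) : φ (-t) = φ t := by
  simp [stdGaussianPDF]

lemma stdGaussianPDF_le (t : ℝ) : φ t ≤ (√(2 * π))⁻¹ :=
  mul_le_of_le_one_right (by positivity) (exp_le_one_iff.mpr (by nlinarith [sq_nonneg t]))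

lemma sqrt_two_pi_mul_stdGaussianPDF (t : ℝ) : √(2 * π) * φ t = exp (-t ^ 2 / 2) := by
  rw [stdGaussianPDF, ← mul_assoc, mul_inv_cancel₀ (by positivity), one_mul]

@[fun_prop]
lemma continuous_stdGaussianPDF : Continuous φ := by
  unfold stdGaussianPDF
  fun_prop

lemma hasDerivAt_stdGaussianPDF (t : ℝ) : HasDerivAt φ (-(t * φ t)) t := by
  have h : HasDerivAt (fun x : ℝ => -x ^ 2 / 2) (-t) t :=
    ((hasDerivAt_pow 2 t).neg.div_const 2).congr_deriv (by ring)
  exact (h.exp.const_mul (√(2 * π))⁻¹).congr_deriv (by unfold stdGaussianPDF; ring)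

lemma integrable_stdGaussianPDF : Integrable φ := by
  rw [stdGaussianPDF_eq_gaussianPDFReal]
  exact integrable_gaussianPDFReal 0 1

lemma integral_stdGaussianPDF : ∫ t, φ t = 1 := by
  rw [stdGaussianPDF_eq_gaussianPDFReal]
  exact integral_gaussianPDFReal_eq_one 0 one_ne_zero

lemma integrable_pow_mul_stdGaussianPDF (n : ℕ) : Integrable fun x => x ^ n * φ x := by
  refine ((integrable_pow_mul_exp_neg_mul_sq (k := 1 / 2) (by norm_num) n).const_mul
    (√(2 * π))⁻¹).congr (ae_of_all _ fun x => ?_)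
  unfold stdGaussianPDF
  ring_nf

lemma integrable_mul_stdGaussianPDF : Integrable fun x => x * φ x := by
  simpa using integrable_pow_mul_stdGaussianPDF 1

lemma integrable_pow_mul_stdGaussianPDF_mul (n : ℕ) {g : ℝ → ℝ} {A B : ℝ} (hg : Continuous g)
    (hgAB : ∀ x, |g x| ≤ A * |x| + B) : Integrable fun x => x ^ n * φ x * g x := by
  refine (((integrable_pow_mul_stdGaussianPDF (n + 1)).norm.const_mul A).add
    ((integrable_pow_mul_stdGaussianPDF n).norm.const_mul B)).mono'
    (by fun_prop : Continuous fun x => x ^ n * φ x * g x).aestronglyMeasurable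
    (ae_of_all _ fun x => ?_)
  have hφ := stdGaussianPDF_nonneg x
  simp only [Pi.add_apply, norm_mul, norm_pow, Real.norm_eq_abs, abs_of_nonneg hφ]
  calc |x| ^ n * φ x * |g x| ≤ |x| ^ n * φ x * (A * |x| + B) :=
        mul_le_mul_of_nonneg_left (hgAB x) (by positivity)
    _ = A * (|x| ^ (n + 1) * φ x) + B * (|x| ^ n * φ x) := by ring

lemma integrable_stdGaussianPDF_mul {h : ℝ → ℝ} {C : ℝ} (hh : Continuous h)
    (hC : ∀ x, |h x| ≤ C) : Integrable fun x => φ x * h x := by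
  simpa using integrable_pow_mul_stdGaussianPDF_mul 0 (A := 0) hh (by simpa using hC)

/-- Stein's identity on a half-line. -/
theorem integral_Ioi_mul_stdGaussianPDF_mul {g g' : ℝ → ℝ} {a : ℝ}
    (hg : ∀ x ∈ Ici a, HasDerivAt g (g' x) x)
    (hφg : IntegrableOn (fun x => φ x * g x) (Ioi a))
    (hxφg : IntegrableOn (fun x => x * φ x * g x) (Ioi a))
    (hφg' : IntegrableOn (fun x => φ x * g' x) (Ioi a)) :
    ∫ x in Ioi a, x * φ x * g x = φ a * g a + ∫ x in Ioi a, φ x * g' x := by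
  have hderiv : ∀ x ∈ Ici a,
      HasDerivAt (fun x => φ x * g x) (φ x * g' x - x * φ x * g x) x := fun x hx =>
    ((hasDerivAt_stdGaussianPDF x).mul (hg x hx)).congr_deriv (by ring)
  have hint : IntegrableOn (fun x => φ x * g' x - x * φ x * g x) (Ioi a) := hφg'.sub hxφg
  have hlim := tendsto_zero_of_hasDerivAt_of_integrableOn_Ioi
    (fun x hx => hderiv x (Ioi_subset_Ici_self hx)) hint hφg
  have key := integral_Ioi_of_hasDerivAt_of_tendsto' hderiv hint hlim
  rw [integral_sub hφg' hxφg] at key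
  linarith

lemma integral_Ioi_mul_stdGaussianPDF (c : ℝ) : ∫ x in Ioi c, x * φ x = φ c := by
  simpa using integral_Ioi_mul_stdGaussianPDF_mul (g := fun _ => 1) (g' := fun _ => 0) (a := c)
    (fun x _ => hasDerivAt_const x 1) (by simpa using integrable_stdGaussianPDF.integrableOn)
    (by simpa using integrable_mul_stdGaussianPDF.integrableOn) (by simp)

lemma integral_Ioi_stdGaussianPDF (c : ℝ) : ∫ x in Ioi c, φ x = Φ (-c) := by
  rw [stdNormalCDF, ← integral_comp_neg_Ioi]
  simp_rw [stdGaussianPDF_neg]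

lemma stdNormalCDF_nonneg (x : ℝ) : 0 ≤ Φ x :=
  setIntegral_nonneg measurableSet_Iic fun t _ => stdGaussianPDF_nonneg t

lemma stdNormalCDF_le_one (x : ℝ) : Φ x ≤ 1 := by
  rw [← integral_stdGaussianPDF]
  exact setIntegral_le_integral integrable_stdGaussianPDF (ae_of_all _ stdGaussianPDF_nonneg)

lemma abs_stdNormalCDF_le_one (x : ℝ) : |Φ x| ≤ 1 :=
  abs_le.mpr ⟨by linarith [stdNormalCDF_nonneg x], stdNormalCDF_le_one x⟩

lemma hasDerivAt_stdNormalCDF (x : ℝ) : HasDerivAt Φ (φ x) x := by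
  have hΦ : ∀ u, Φ u = Φ 0 + ∫ t in (0 : ℝ)..u, φ t := fun u => by
    rw [stdNormalCDF, stdNormalCDF, ← intervalIntegral.integral_Iic_sub_Iic
      integrable_stdGaussianPDF.integrableOn integrable_stdGaussianPDF.integrableOn]
    ring
  rw [funext hΦ]
  exact (intervalIntegral.integral_hasDerivAt_right integrable_stdGaussianPDF.intervalIntegrable
    continuous_stdGaussianPDF.aestronglyMeasurable.stronglyMeasurableAtFilter
    continuous_stdGaussianPDF.continuousAt).const_add _

@[fun_prop]
lemma continuous_stdNormalCDF : Continuous Φ :=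
  continuous_iff_continuousAt.mpr fun x => (hasDerivAt_stdNormalCDF x).continuousAt

lemma integral_Ioi_comp_sub_div (f : ℝ → ℝ) (c m : ℝ) {s : ℝ} (hs : 0 < s) :
    ∫ x in Ioi c, f ((x - m) / s) = s * ∫ u in Ioi ((c - m) / s), f u := by
  have hind : (Ioi c).indicator (fun x => f ((x - m) / s)) =
      fun x => (fun y => (Ioi ((c - m) / s)).indicator f (y / s)) (x - m) := by
    ext x
    simp only [indicator, mem_Ioi, div_lt_div_iff_of_pos_right hs, sub_lt_sub_iff_right]
  rw [← integral_indicator measurableSet_Ioi, ← integral_indicator measurableSet_Ioi, hind,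
    integral_sub_right_eq_self, Measure.integral_comp_div, abs_of_pos hs, smul_eq_mul]

lemma integral_Ioi_gaussian {s : ℝ} (hs : 0 < s) (b m : ℝ) :
    ∫ y in Ioi b, s⁻¹ * φ ((y - m) / s) = Φ ((m - b) / s) := by
  rw [integral_const_mul, integral_Ioi_comp_sub_div φ b m hs, integral_Ioi_stdGaussianPDF,
    inv_mul_cancel_left₀ hs.ne', ← neg_div, neg_sub]

noncomputable def gaussianPartialMean (m s b : ℝ) : ℝ :=
  m * Φ ((m - b) / s) + s * φ ((m - b) / s)

lemma integral_Ioi_mul_gaussian {s : ℝ} (hs : 0 < s) (b m : ℝ) :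
    ∫ y in Ioi b, y * (s⁻¹ * φ ((y - m) / s)) = gaussianPartialMean m s b := by
  have hy : ∀ y, y * (s⁻¹ * φ ((y - m) / s)) =
      (fun u => m * s⁻¹ * φ u + u * φ u) ((y - m) / s) := fun y => by
    field_simp
    ring
  rw [funext hy, integral_Ioi_comp_sub_div (fun u => m * s⁻¹ * φ u + u * φ u) b m hs,
    integral_add (integrable_stdGaussianPDF.const_mul _).integrableOn
      integrable_mul_stdGaussianPDF.integrableOn,
    integral_const_mul, integral_Ioi_stdGaussianPDF, integral_Ioi_mul_stdGaussianPDF,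
    gaussianPartialMean, ← neg_div, neg_sub, show (b - m) / s = -((m - b) / s) by ring,
    stdGaussianPDF_neg]
  field_simp

lemma hasDerivAt_gaussianPartialMean (m s b : ℝ) :
    HasDerivAt (gaussianPartialMean · s b)
      (Φ ((m - b) / s) + b * (s⁻¹ * φ ((b - m) / s))) m := by
  have hw : HasDerivAt (fun m => (m - b) / s) s⁻¹ m := by
    simpa using ((hasDerivAt_id m).sub_const b).div_const s
  refine (((hasDerivAt_id m).mul ((hasDerivAt_stdNormalCDF _).comp m hw)).add
    (((hasDerivAt_stdGaussianPDF _).comp m hw).const_mul s)).congr_deriv ?_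
  rw [show (b - m) / s = -((m - b) / s) by ring, stdGaussianPDF_neg, Function.comp_apply, id]
  rcases eq_or_ne s 0 with rfl | hs
  · simp
  · field_simp
    ring

lemma abs_gaussianPartialMean_le {s : ℝ} (hs : 0 ≤ s) (m b : ℝ) :
    |gaussianPartialMean m s b| ≤ |m| + s * (√(2 * π))⁻¹ := by
  have hΦ := abs_stdNormalCDF_le_one ((m - b) / s)
  have hφ := stdGaussianPDF_le ((m - b) / s)
  calc |gaussianPartialMean m s b|
      ≤ |m * Φ ((m - b) / s)| + |s * φ ((m - b) / s)| := abs_add_le _ _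
    _ = |m| * |Φ ((m - b) / s)| + s * φ ((m - b) / s) := by
        rw [abs_mul, abs_mul, abs_of_nonneg hs, abs_of_nonneg (stdGaussianPDF_nonneg _)]
    _ ≤ |m| + s * (√(2 * π))⁻¹ := by gcongr; exact mul_le_of_le_one_right (abs_nonneg m) hΦ

lemma bivStdGaussianPDF_comm (ρ x y : ℝ) :
    bivStdGaussianPDF ρ x y = bivStdGaussianPDF ρ y x := by
  unfold bivStdGaussianPDF
  ring_nf

lemma bivStdGaussianPDF_neg_neg (ρ x y : ℝ) :
    bivStdGaussianPDF ρ (-x) (-y) = bivStdGaussianPDF ρ x y := by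
  unfold bivStdGaussianPDF
  ring_nf

lemma continuous_bivStdGaussianPDF (ρ : ℝ) :
    Continuous fun p : ℝ × ℝ => bivStdGaussianPDF ρ p.1 p.2 := by
  unfold bivStdGaussianPDF
  fun_prop

lemma one_sub_abs_mul_sq_add_sq_le (ρ x y : ℝ) :
    (1 - |ρ|) * (x ^ 2 + y ^ 2) ≤ x ^ 2 - 2 * ρ * x * y + y ^ 2 := by
  rcases abs_cases ρ with ⟨h, hρ⟩ | ⟨h, hρ⟩ <;> rw [h]
  · nlinarith [mul_nonneg hρ (sq_nonneg (x - y))]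
  · nlinarith [mul_nonneg (neg_nonneg.mpr hρ.le) (sq_nonneg (x + y))]

section Bivariate

variable {ρ s : ℝ}

lemma bivStdGaussianPDF_eq_mul (hs : 0 < s) (hρs : ρ ^ 2 + s ^ 2 = 1) (x y : ℝ) :
    bivStdGaussianPDF ρ x y = φ x * (s⁻¹ * φ ((y - ρ * x) / s)) := by
  have h2π : (√(2 * π))⁻¹ * (√(2 * π))⁻¹ = (2 * π)⁻¹ := by
    rw [← mul_inv, mul_self_sqrt (by positivity)]
  rw [bivStdGaussianPDF, show 1 - ρ ^ 2 = s ^ 2 by linarith, sqrt_sq hs.le]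
  unfold stdGaussianPDF
  calc _ = (√(2 * π))⁻¹ * (√(2 * π))⁻¹ * s⁻¹ *
        exp (-x ^ 2 / 2 + -((y - ρ * x) / s) ^ 2 / 2) := by
        rw [h2π, mul_inv, mul_inv]
        congr 2
        field_simp
        linear_combination x ^ 2 * hρs
    _ = _ := by rw [exp_add]; ring

lemma integrable_pow_mul_pow_mul_bivStdGaussianPDF (hs : 0 < s) (hρs : ρ ^ 2 + s ^ 2 = 1)
    (n m : ℕ) : Integrable fun p : ℝ × ℝ => p.1 ^ n * p.2 ^ m * bivStdGaussianPDF ρ p.1 p.2 := by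
  set k := (1 - |ρ|) / (2 * s ^ 2) with hk_def
  have hk : 0 < k := by
    have : |ρ| < 1 := (sq_lt_one_iff_abs_lt_one ρ).mp (by nlinarith)
    exact div_pos (by linarith) (by positivity)
  have hbound : ∀ x y, bivStdGaussianPDF ρ x y ≤
      (2 * π * s)⁻¹ * (exp (-k * x ^ 2) * exp (-k * y ^ 2)) := fun x y => by
    rw [bivStdGaussianPDF, show 1 - ρ ^ 2 = s ^ 2 by linarith, sqrt_sq hs.le, ← exp_add,
      show -k * x ^ 2 + -k * y ^ 2 = -((1 - |ρ|) * (x ^ 2 + y ^ 2)) / (2 * s ^ 2) by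
        rw [hk_def]; ring]
    gcongr
    exact one_sub_abs_mul_sq_add_sq_le ρ x y
  have hprod : Integrable fun p : ℝ × ℝ =>
      (2 * π * s)⁻¹ * ((p.1 ^ n * exp (-k * p.1 ^ 2)) * (p.2 ^ m * exp (-k * p.2 ^ 2))) := by
    rw [Measure.volume_eq_prod]
    exact ((integrable_pow_mul_exp_neg_mul_sq hk n).mul_prod
      (integrable_pow_mul_exp_neg_mul_sq hk m)).const_mul _
  refine hprod.mono (((continuous_fst.pow n).mul (continuous_snd.pow m)).mul
    (continuous_bivStdGaussianPDF ρ)).aestronglyMeasurable (ae_of_all _ fun ⟨x, y⟩ => ?_)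
  have hf : 0 ≤ bivStdGaussianPDF ρ x y := by unfold bivStdGaussianPDF; positivity
  simp only [norm_mul, norm_pow, norm_inv, Real.norm_eq_abs, abs_of_nonneg hf,
    abs_of_pos (exp_pos _), abs_of_pos pi_pos, abs_of_pos hs]
  calc |x| ^ n * |y| ^ m * bivStdGaussianPDF ρ x y
      ≤ |x| ^ n * |y| ^ m * ((2 * π * s)⁻¹ * (exp (-k * x ^ 2) * exp (-k * y ^ 2))) :=
        mul_le_mul_of_nonneg_left (hbound x y) (by positivity)
    _ = _ := by ring

lemma integral_Ioi_bivStdGaussianPDF (hs : 0 < s) (hρs : ρ ^ 2 + s ^ 2 = 1) (x b : ℝ) :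
    ∫ y in Ioi b, bivStdGaussianPDF ρ x y = φ x * Φ ((ρ * x - b) / s) := by
  simp_rw [bivStdGaussianPDF_eq_mul hs hρs x]
  rw [integral_const_mul, integral_Ioi_gaussian hs]

lemma integral_Ioi_mul_bivStdGaussianPDF (hs : 0 < s) (hρs : ρ ^ 2 + s ^ 2 = 1) (x b : ℝ) :
    ∫ y in Ioi b, y * bivStdGaussianPDF ρ x y = φ x * gaussianPartialMean (ρ * x) s b := by
  simp_rw [bivStdGaussianPDF_eq_mul hs hρs x, mul_left_comm _ (φ x)]
  rw [integral_const_mul, integral_Ioi_mul_gaussian hs]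

lemma bivStdNormalCDF_neg_neg (hs : 0 < s) (hρs : ρ ^ 2 + s ^ 2 = 1) (a b : ℝ) :
    bivStdNormalCDF (-a) (-b) ρ = ∫ x in Ioi a, φ x * Φ ((ρ * x - b) / s) := by
  have hint := integrable_pow_mul_pow_mul_bivStdGaussianPDF hs hρs 0 0
  rw [Measure.volume_eq_prod] at hint
  rw [bivStdNormalCDF, Measure.volume_eq_prod,
    setIntegral_prod _ (by simpa using hint.integrableOn), ← integral_comp_neg_Ioi]
  simp_rw [← integral_comp_neg_Ioi b, bivStdGaussianPDF_neg_neg,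
    integral_Ioi_bivStdGaussianPDF hs hρs]

lemma integral_Ioi_mul_stdGaussianPDF_mul_gaussianPartialMean (hs : 0 < s)
    (hρs : ρ ^ 2 + s ^ 2 = 1) (a b : ℝ) :
    ∫ x in Ioi a, x * φ x * gaussianPartialMean (ρ * x) s b =
      φ a * gaussianPartialMean (ρ * a) s b + ρ * bivStdNormalCDF (-a) (-b) ρ +
        ρ * b * (φ b * Φ ((ρ * b - a) / s)) := by
  have hg : ∀ x, HasDerivAt (fun x => gaussianPartialMean (ρ * x) s b)
      (ρ * Φ ((ρ * x - b) / s) + ρ * b * (s⁻¹ * φ ((b - ρ * x) / s))) x := fun x =>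
    ((hasDerivAt_gaussianPartialMean (ρ * x) s b).comp x
      ((hasDerivAt_id x).const_mul ρ)).congr_deriv (by ring)
  have hcont : Continuous fun x => gaussianPartialMean (ρ * x) s b :=
    continuous_iff_continuousAt.mpr fun x => (hg x).continuousAt
  have hgrowth : ∀ x, |gaussianPartialMean (ρ * x) s b| ≤ |ρ| * |x| + s * (√(2 * π))⁻¹ :=
    fun x => by simpa [abs_mul] using abs_gaussianPartialMean_le hs.le (ρ * x) b
  have hΦ : Integrable fun x => φ x * Φ ((ρ * x - b) / s) :=
    integrable_stdGaussianPDF_mul (by fun_prop) fun x => abs_stdNormalCDF_le_one _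
  have hdensity : Integrable fun x => φ x * (s⁻¹ * φ ((b - ρ * x) / s)) := by
    refine integrable_stdGaussianPDF_mul (C := s⁻¹ * (√(2 * π))⁻¹) (by fun_prop) fun x => ?_
    rw [abs_of_nonneg (by have := stdGaussianPDF_nonneg ((b - ρ * x) / s); positivity)]
    exact mul_le_mul_of_nonneg_left (stdGaussianPDF_le _) (by positivity)
  have hsplit : ∀ x, φ x * (ρ * Φ ((ρ * x - b) / s) + ρ * b * (s⁻¹ * φ ((b - ρ * x) / s))) =
      ρ * (φ x * Φ ((ρ * x - b) / s)) + ρ * b * (φ x * (s⁻¹ * φ ((b - ρ * x) / s))) :=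
    fun x => by ring
  have hφg' : Integrable fun x =>
      φ x * (ρ * Φ ((ρ * x - b) / s) + ρ * b * (s⁻¹ * φ ((b - ρ * x) / s))) := by
    rw [funext hsplit]
    exact (hΦ.const_mul ρ).add (hdensity.const_mul _)
  rw [integral_Ioi_mul_stdGaussianPDF_mul (fun x _ => hg x)
      (by simpa using (integrable_pow_mul_stdGaussianPDF_mul 0 hcont hgrowth).integrableOn)
      (by simpa using (integrable_pow_mul_stdGaussianPDF_mul 1 hcont hgrowth).integrableOn)
      hφg'.integrableOn,
    funext hsplit,
    integral_add (hΦ.const_mul ρ).integrableOn (hdensity.const_mul _).integrableOn,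
    integral_const_mul, integral_const_mul, ← bivStdNormalCDF_neg_neg hs hρs, add_assoc]
  simp_rw [← bivStdGaussianPDF_eq_mul hs hρs, bivStdGaussianPDF_comm ρ _ b]
  rw [integral_Ioi_bivStdGaussianPDF hs hρs]

lemma setIntegral_Ici_prod_Ici_mul_mul_bivStdGaussianPDF (hs : 0 < s)
    (hρs : ρ ^ 2 + s ^ 2 = 1) (a b : ℝ) :
    ∫ p in Ici a ×ˢ Ici b, p.1 * p.2 * bivStdGaussianPDF ρ p.1 p.2 =
      s ^ 2 * bivStdGaussianPDF ρ a b + ρ * bivStdNormalCDF (-a) (-b) ρ +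
        ρ * (a * φ a * Φ ((ρ * a - b) / s) + b * φ b * Φ ((ρ * b - a) / s)) := by
  have hint := integrable_pow_mul_pow_mul_bivStdGaussianPDF hs hρs 1 1
  rw [Measure.volume_eq_prod] at hint
  have hinner : ∀ x, ∫ y in Ici b, x * y * bivStdGaussianPDF ρ x y =
      x * φ x * gaussianPartialMean (ρ * x) s b := fun x => by
    simp_rw [integral_Ici_eq_integral_Ioi, mul_assoc x]
    rw [integral_const_mul, integral_Ioi_mul_bivStdGaussianPDF hs hρs]
  rw [Measure.volume_eq_prod, setIntegral_prod _ (by simpa using hint.integrableOn)]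
  simp_rw [hinner]
  rw [integral_Ici_eq_integral_Ioi,
    integral_Ioi_mul_stdGaussianPDF_mul_gaussianPartialMean hs hρs, gaussianPartialMean,
    bivStdGaussianPDF_eq_mul hs hρs a b, show (b - ρ * a) / s = -((ρ * a - b) / s) by ring, stdGaussianPDF_neg]
  field_simp
  ring

end Bivariate

/-- For a bivariate standard Gaussian `(z₁, z₂)` with correlation `ρ ∈ (−1,1)`:
`E[z₁ z₂ 1{z₁ ≥ a, z₂ ≥ b}] = (√(1−ρ²)/(2π)) exp(−(a² − 2ρab + b²)/(2(1−ρ²)))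
  + ρ Φ₂(−a, −b, ρ) + (ρ/√(2π)) (a T₁ + b T₂)`. -/
theorem product_truncated_bivariate (a b ρ : ℝ) (hρ : ρ ∈ Set.Ioo (-1 : ℝ) 1) :
    (∫ p in Set.Ici a ×ˢ Set.Ici b, p.1 * p.2 * bivStdGaussianPDF ρ p.1 p.2) =
      Real.sqrt (1 - ρ ^ 2) / (2 * Real.pi) *
          Real.exp (-(a ^ 2 - 2 * ρ * a * b + b ^ 2) / (2 * (1 - ρ ^ 2))) +
        ρ * bivStdNormalCDF (-a) (-b) ρ +
        ρ / Real.sqrt (2 * Real.pi) *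
          (a * (Real.exp (-a ^ 2 / 2) * stdNormalCDF ((ρ * a - b) / Real.sqrt (1 - ρ ^ 2))) +
            b * (Real.exp (-b ^ 2 / 2) *
              stdNormalCDF ((ρ * b - a) / Real.sqrt (1 - ρ ^ 2)))) := by
  have h1 : 0 < 1 - ρ ^ 2 := by nlinarith [hρ.1, hρ.2]
  have hs : 0 < √(1 - ρ ^ 2) := sqrt_pos.mpr h1
  have hρs : ρ ^ 2 + √(1 - ρ ^ 2) ^ 2 = 1 := by rw [sq_sqrt h1.le]; ring
  rw [setIntegral_Ici_prod_Ici_mul_mul_bivStdGaussianPDF hs hρs, bivStdGaussianPDF,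
    ← sqrt_two_pi_mul_stdGaussianPDF a, ← sqrt_two_pi_mul_stdGaussianPDF b]
  field_simp
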